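/- Let A, C ∈ ℝ^{n×n}, r ≥ ε ≥ 0, let d, q : [0,∞) → [−1,1] be measurable, let x be a solution of system (2.12), and define v(t) := x(t−r) − x(t−r−εd(t)) for t ≥ 0. Then for almost every t ≥ r + ε with d(t) ≥ 0, the identity v(t) = (exp(Aε|d(t)|) − I) x(t−r−εd(t)) − ∫_{t−r−εd(t)}^{t−r} exp(A(t−r−s)) q(s) C v(s) ds holds. -/

import Mathlib

open MeasureTheory

/-- Matrix-vector multiplication between Euclidean spaces. -/
noncomputable def mv {n m : ℕ} (A : Matrix (Fin n) (Fin m) ℝ)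
    (x : EuclideanSpace ℝ (Fin m)) : EuclideanSpace ℝ (Fin n) :=
  Matrix.toEuclideanLin A x

/-- `mexp A t = exp (t A)`, the matrix exponential. -/
noncomputable def mexp {n : ℕ} (A : Matrix (Fin n) (Fin n) ℝ) (t : ℝ) :
    Matrix (Fin n) (Fin n) ℝ :=
  NormedSpace.exp (t • A)

/-!
On the window `[a, b] = [t - r - ε d(t), t - r]` (which lies in `[0, ∞)` when `d(t) ≥ 0`), the
solution satisfies `ẋ = A x + g` with forcing `g(s) = -q(s) C v(s)`. The identity is therefore the
variation-of-constants formula `x(b) = e^{(b-a)A} x(a) + ∫ₐᵇ e^{(b-s)A} g(s) ds`, obtained by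
integrating the derivative of `s ↦ e^{(b-s)A} x(s)`. Since `x` is only an indefinite integral of an
integrable function, that product rule is proved by Fubini on the triangle `a < u ≤ s ≤ b`
instead of pointwise differentiation.
-/

open Set

section ProductRule

variable {E F : Type*} [NormedAddCommGroup E] [NormedSpace ℝ E]
  [NormedAddCommGroup F] [NormedSpace ℝ F]

theorem intervalIntegral_indicator_Ici {g : ℝ → F} {a b u : ℝ} (hu : u ∈ Ioc a b) :
    ∫ s in a..b, (Ici u).indicator g s = ∫ s in u..b, g s := by
  have hIoc : Ioc a b ∩ Ici u = Icc u b := by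
    ext s
    simp only [mem_inter_iff, mem_Ioc, mem_Ici, mem_Icc]
    exact ⟨fun h => ⟨h.2, h.1.2⟩, fun h => ⟨⟨hu.1.trans_le h.1, h.2⟩, h.1⟩⟩
  rw [intervalIntegral.integral_of_le (hu.1.le.trans hu.2), setIntegral_indicator measurableSet_Ici,
    hIoc, integral_Icc_eq_integral_Ioc, ← intervalIntegral.integral_of_le hu.2]

theorem IntervalIntegrable.continuousOn_clm_apply {M : ℝ → E →L[ℝ] F} {f : ℝ → E} {a b : ℝ}
    (hM : ContinuousOn M (uIcc a b)) (hf : IntervalIntegrable f volume a b) :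
    IntervalIntegrable (fun s => M s (f s)) volume a b := by
  obtain ⟨C, hC⟩ := isCompact_uIcc.exists_bound_of_continuousOn hM
  rw [intervalIntegrable_iff] at hf ⊢
  exact (ContinuousLinearMap.id ℝ (E →L[ℝ] F)).integrable_of_bilin_of_bdd_left C
    ((hM.mono uIoc_subset_uIcc).aestronglyMeasurable measurableSet_uIoc)
    (ae_restrict_of_forall_mem measurableSet_uIoc fun s hs => hC s (uIoc_subset_uIcc hs)) hf

theorem integrableOn_Ioc_prod_ite_le_clm_apply {M : ℝ → E →L[ℝ] F} {f : ℝ → E} {a b : ℝ}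
    (hM : ContinuousOn M (Icc a b)) (hf : IntegrableOn f (Ioc a b)) :
    IntegrableOn (fun p : ℝ × ℝ => if p.2 ≤ p.1 then M p.1 (f p.2) else 0)
      (Ioc a b ×ˢ Ioc a b) := by
  obtain ⟨C, hC⟩ := isCompact_Icc.exists_bound_of_continuousOn hM
  have hbilin : (fun p : ℝ × ℝ => if p.2 ≤ p.1 then M p.1 (f p.2) else 0) = fun p =>
      ContinuousLinearMap.id ℝ (E →L[ℝ] F)
        ({p | p.2 ≤ p.1}.indicator (fun p => M p.1) p) (f p.2) := by
    ext1 p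
    by_cases h : p.2 ≤ p.1 <;> simp [h]
  rw [IntegrableOn, Measure.volume_eq_prod, ← Measure.prod_restrict, hbilin]
  refine ContinuousLinearMap.integrable_of_bilin_of_bdd_left _ C ?_ ?_ (hf.comp_snd _) <;>
    rw [Measure.prod_restrict]
  · refine (ContinuousOn.aestronglyMeasurable ?_
      (measurableSet_Ioc.prod measurableSet_Ioc)).indicator
        (measurableSet_le measurable_snd measurable_fst)
    exact hM.comp continuous_fst.continuousOn fun p hp => Ioc_subset_Icc_self hp.1
  · refine ae_restrict_of_forall_mem (measurableSet_Ioc.prod measurableSet_Ioc) fun p hp => ?_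
    exact (norm_indicator_le_norm_self _ _).trans (hC _ (Ioc_subset_Icc_self hp.1))

variable [CompleteSpace F]

theorem integral_deriv_apply_eq_sub {M M' : ℝ → E →L[ℝ] F} {a b : ℝ}
    (hM : ∀ s ∈ uIcc a b, HasDerivAt M (M' s) s) (hM' : ContinuousOn M' (uIcc a b)) (v : E) :
    ∫ s in a..b, M' s v = M b v - M a v :=
  intervalIntegral.integral_eq_sub_of_hasDerivAt
    (fun s hs => by simpa using (hM s hs).clm_apply (hasDerivAt_const s v))
    (hM'.clm_apply continuousOn_const).intervalIntegrable

variable [CompleteSpace E]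

theorem integral_deriv_apply_primitive {M M' : ℝ → E →L[ℝ] F} {f : ℝ → E} {a b : ℝ}
    (hab : a ≤ b) (hM : ∀ s ∈ Icc a b, HasDerivAt M (M' s) s) (hM' : ContinuousOn M' (Icc a b))
    (hf : IntervalIntegrable f volume a b) :
    ∫ s in a..b, M' s (∫ u in a..s, f u) = ∫ u in a..b, (M b - M u) (f u) := by
  set K : ℝ → ℝ → F := fun s u => if u ≤ s then M' s (f u) else 0
  have hK : IntegrableOn (Function.uncurry K) (uIoc a b ×ˢ uIoc a b) := by
    rw [uIoc_of_le hab]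
    exact integrableOn_Ioc_prod_ite_le_clm_apply hM'
      ((intervalIntegrable_iff_integrableOn_Ioc_of_le hab).1 hf)
  calc ∫ s in a..b, M' s (∫ u in a..s, f u)
      = ∫ s in a..b, ∫ u in a..b, K s u := by
        refine intervalIntegral.integral_congr fun s hs => ?_
        rw [← ContinuousLinearMap.intervalIntegral_comp_comm _
            (hf.mono_set (uIcc_subset_uIcc_left hs)),
          ← intervalIntegral.integral_indicator (by rwa [uIcc_of_le hab] at hs)]
        rfl
    _ = ∫ u in a..b, ∫ s in a..b, K s u := intervalIntegral_intervalIntegral_swap hK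
    _ = ∫ u in a..b, (M b - M u) (f u) := by
        refine intervalIntegral.integral_congr_ae (Filter.Eventually.of_forall fun u hu => ?_)
        rw [uIoc_of_le hab] at hu
        have hub : uIcc u b ⊆ Icc a b := by
          rw [uIcc_of_le hu.2]
          exact Icc_subset_Icc_left hu.1.le
        rw [show (fun s => K s u) = (Ici u).indicator (fun s => M' s (f u)) from rfl,
          intervalIntegral_indicator_Ici hu,
          integral_deriv_apply_eq_sub (fun s hs => hM s (hub hs)) (hM'.mono hub)]
        rfl

theorem integral_deriv_apply_add_apply_eq_sub {M M' : ℝ → E →L[ℝ] F} {x f : ℝ → E} {a b : ℝ}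
    (hab : a ≤ b) (hM : ∀ s ∈ Icc a b, HasDerivAt M (M' s) s) (hM' : ContinuousOn M' (Icc a b))
    (hf : IntervalIntegrable f volume a b) (hx : ∀ s ∈ Icc a b, x s = x a + ∫ u in a..s, f u) :
    ∫ s in a..b, M' s (x s) + M s (f s) = M b (x b) - M a (x a) := by
  have hM₁ : ∀ s ∈ uIcc a b, HasDerivAt M (M' s) s := by rwa [uIcc_of_le hab]
  have hM'₁ : ContinuousOn M' (uIcc a b) := by rwa [uIcc_of_le hab]
  have hMf := hf.continuousOn_clm_apply fun s hs => (hM₁ s hs).continuousAt.continuousWithinAt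
  have hconst := (hM'₁.clm_apply (continuousOn_const (c := x a))).intervalIntegrable (μ := volume)
  have hvar := (hM'₁.clm_apply (intervalIntegral.continuousOn_primitive_interval' hf
    left_mem_uIcc)).intervalIntegrable (μ := volume)
  calc ∫ s in a..b, M' s (x s) + M s (f s)
      = ∫ s in a..b, M' s (x a) + (M' s (∫ u in a..s, f u) + M s (f s)) := by
        refine intervalIntegral.integral_congr fun s hs => ?_
        rw [uIcc_of_le hab] at hs
        simp only [hx s hs, map_add, add_assoc]
    _ = (M b (x a) - M a (x a)) + (∫ u in a..b, (M b - M u) (f u)) + ∫ s in a..b, M s (f s) := by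
        rw [intervalIntegral.integral_add hconst (hvar.add hMf),
          intervalIntegral.integral_add hvar hMf, integral_deriv_apply_eq_sub hM₁ hM'₁,
          integral_deriv_apply_primitive hab hM hM' hf, add_assoc]
    _ = M b (x b) - M a (x a) := by
        simp only [sub_apply]
        rw [intervalIntegral.integral_sub (hf.continuousOn_clm_apply continuousOn_const) hMf,
          ContinuousLinearMap.intervalIntegral_comp_comm _ hf, hx b (right_mem_Icc.2 hab),
          map_add]
        abel

end ProductRule

section VariationOfConstants

variable {E : Type*} [NormedAddCommGroup E] [NormedSpace ℝ E] [CompleteSpace E]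

theorem hasDerivAt_exp_sub_smul (T : E →L[ℝ] E) (b s : ℝ) :
    HasDerivAt (fun s : ℝ => NormedSpace.exp ((b - s) • T))
      (-(NormedSpace.exp ((b - s) • T) * T)) s := by
  simpa [Function.comp_def] using
    (hasDerivAt_exp_smul_const T (b - s)).scomp s ((hasDerivAt_id s).const_sub b)

theorem variation_of_constants {T : E →L[ℝ] E} {x f : ℝ → E} {a b : ℝ} (hab : a ≤ b)
    (hf : IntervalIntegrable f volume a b) (hx : ∀ s ∈ Icc a b, x s = x a + ∫ u in a..s, f u) :
    x b = NormedSpace.exp ((b - a) • T) (x a) +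
      ∫ s in a..b, NormedSpace.exp ((b - s) • T) (f s - T (x s)) := by
  have hM := hasDerivAt_exp_sub_smul T b
  have hMc : Continuous fun s : ℝ => NormedSpace.exp ((b - s) • T) :=
    continuous_iff_continuousAt.2 fun s => (hM s).continuousAt
  have key := integral_deriv_apply_add_apply_eq_sub hab (fun s _ => hM s)
    ((hMc.mul continuous_const).neg.continuousOn) hf hx
  simp only [neg_apply, mul_apply_eq_comp, neg_add_eq_sub, ← map_sub, sub_self, zero_smul,
    NormedSpace.exp_zero, one_apply_eq_self] at key
  rw [key, add_sub_cancel]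

end VariationOfConstants

section MatrixBridge

variable {n : ℕ}

theorem mv_eq_toEuclideanCLM (M : Matrix (Fin n) (Fin n) ℝ) (w : EuclideanSpace ℝ (Fin n)) :
    mv M w = Matrix.toEuclideanCLM (𝕜 := ℝ) M w := rfl

theorem continuous_toEuclideanCLM :
    Continuous (Matrix.toEuclideanCLM (𝕜 := ℝ) (n := Fin n)) :=
  LinearMap.continuous_of_finiteDimensional
    (Matrix.toEuclideanCLM (𝕜 := ℝ) (n := Fin n)).toAlgEquiv.toLinearMap

theorem toEuclideanCLM_mexp (A : Matrix (Fin n) (Fin n) ℝ) (t : ℝ) :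
    Matrix.toEuclideanCLM (𝕜 := ℝ) (mexp A t) =
      NormedSpace.exp (t • Matrix.toEuclideanCLM (𝕜 := ℝ) A) := by
  let _ := Matrix.linftyOpNormedRing (n := Fin n) (α := ℝ)
  let _ := Matrix.linftyOpNormedAlgebra (R := ℝ) (n := Fin n) (α := ℝ)
  let _ : NormedAlgebra ℚ (Matrix (Fin n) (Fin n) ℝ) := NormedAlgebra.restrictScalars ℚ ℝ _
  rw [mexp, ← map_smul]
  exact NormedSpace.map_exp _ continuous_toEuclideanCLM (t • A)

theorem mv_mexp (A : Matrix (Fin n) (Fin n) ℝ) (t : ℝ) (w : EuclideanSpace ℝ (Fin n)) :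
    mv (mexp A t) w = NormedSpace.exp (t • Matrix.toEuclideanCLM (𝕜 := ℝ) A) w := by
  rw [mv_eq_toEuclideanCLM, toEuclideanCLM_mexp]

theorem mv_sub_one (M : Matrix (Fin n) (Fin n) ℝ) (w : EuclideanSpace ℝ (Fin n)) :
    mv (M - 1) w = mv M w - w := by
  simp only [mv_eq_toEuclideanCLM, map_sub, map_one, sub_apply, one_apply_eq_self]

end MatrixBridge

theorem eq_add_integral_of_forall_eq_add_integral {E : Type*} [NormedAddCommGroup E]
    [NormedSpace ℝ E] {x f : ℝ → E} {a s : ℝ} (hf : IntegrableOn f (Icc 0 s))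
    (hx : ∀ t, 0 ≤ t → x t = x 0 + ∫ u in 0..t, f u) (ha : 0 ≤ a) (has : a ≤ s) :
    x s = x a + ∫ u in a..s, f u := by
  rw [hx s (ha.trans has), hx a ha, add_assoc, intervalIntegral.integral_add_adjacent_intervals]
  · exact (hf.mono_set (by rw [uIcc_of_le ha]; exact Icc_subset_Icc_right has)).intervalIntegrable
  · exact (hf.mono_set (by rw [uIcc_of_le has]; exact Icc_subset_Icc_left ha)).intervalIntegrable

section DelaySystem

variable {n : ℕ} {A C : Matrix (Fin n) (Fin n) ℝ} {r ε : ℝ} {d q : ℝ → ℝ}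
  {x : ℝ → EuclideanSpace ℝ (Fin n)}

variable (A C r ε d q x) in
noncomputable def delayRhs (s : ℝ) : EuclideanSpace ℝ (Fin n) :=
  mv A (x s) + q s • mv C (x (s - r - ε * d s) - x (s - r))

theorem integrableOn_delayRhs (hε : 0 ≤ ε) (hεr : ε ≤ r) (hd : Measurable d)
    (hd1 : ∀ t, 0 ≤ t → d t ∈ Icc (-1 : ℝ) 1) (hq : Measurable q)
    (hq1 : ∀ t, 0 ≤ t → q t ∈ Icc (-1 : ℝ) 1) (hxc : ContinuousOn x (Ici (-(r + ε)))) (T : ℝ) :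
    IntegrableOn (delayRhs A C r ε d q x) (Icc 0 T) := by
  set x' := fun s => x (max s (-(r + ε)))
  have hx' : Continuous x' := hxc.comp_continuous (continuous_id.max continuous_const)
    fun s => mem_Ici.2 (le_max_right _ _)
  have hx'x : ∀ s, -(r + ε) ≤ s → x' s = x s := fun s hs => by simp only [x', max_eq_left hs]
  -- the integrand is `s ↦ Φ (s, q s, d s)`, with `Φ` continuous and its argument in a compact box
  set Φ : ℝ × ℝ × ℝ → EuclideanSpace ℝ (Fin n) := fun p =>
    mv A (x' p.1) + p.2.1 • mv C (x' (p.1 - r - ε * p.2.2) - x' (p.1 - r))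
  have hΦ : Continuous Φ := by
    simp only [Φ, mv_eq_toEuclideanCLM]
    fun_prop
  have hrhs : EqOn (delayRhs A C r ε d q x) (fun s => Φ (s, q s, d s)) (Icc 0 T) := by
    intro s hs
    have hds := hd1 s hs.1
    simp only [delayRhs, Φ]
    rw [hx'x s (by linarith [hs.1]), hx'x (s - r) (by linarith [hs.1]),
      hx'x (s - r - ε * d s) (by nlinarith [hs.1, hds.2])]
  obtain ⟨B, hB⟩ :=
    (isCompact_Icc.prod (isCompact_Icc.prod isCompact_Icc)).exists_bound_of_continuousOn
      (hΦ.continuousOn (s := Icc 0 T ×ˢ Icc (-1 : ℝ) 1 ×ˢ Icc (-1 : ℝ) 1))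
  refine IntegrableOn.congr_fun ?_ hrhs.symm measurableSet_Icc
  refine Measure.integrableOn_of_bounded (M := B) measure_Icc_lt_top.ne
    (hΦ.measurable.comp (measurable_id.prodMk (hq.prodMk hd))).aestronglyMeasurable
    (ae_restrict_of_forall_mem measurableSet_Icc fun s hs => hB _ ⟨hs, hq1 s hs.1, hd1 s hs.1⟩)

end DelaySystem

theorem stmt_13 (n : ℕ) (A C : Matrix (Fin n) (Fin n) ℝ)
    (r ε : ℝ) (hε : 0 ≤ ε) (hεr : ε ≤ r)
    (d q : ℝ → ℝ) (hd : Measurable d) (hd1 : ∀ t, 0 ≤ t → d t ∈ Set.Icc (-1 : ℝ) 1)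
    (hq : Measurable q) (hq1 : ∀ t, 0 ≤ t → q t ∈ Set.Icc (-1 : ℝ) 1)
    (x : ℝ → EuclideanSpace ℝ (Fin n))
    (hxc : ContinuousOn x (Set.Ici (-(r + ε))))
    (hxode : ∀ t : ℝ, 0 ≤ t →
      x t = x 0 + ∫ s in (0 : ℝ)..t,
        (mv A (x s) + q s • mv C (x (s - r - ε * d s) - x (s - r))))
    (v : ℝ → EuclideanSpace ℝ (Fin n))
    (hv : ∀ t : ℝ, 0 ≤ t → v t = x (t - r) - x (t - r - ε * d t)) :
    ∀ᵐ t ∂(volume.restrict (Set.Ici (r + ε))), 0 ≤ d t →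
      v t = mv (mexp A (ε * |d t|) - 1) (x (t - r - ε * d t)) -
        ∫ s in (t - r - ε * d t)..(t - r),
          mv (mexp A (t - r - s)) (q s • mv C (v s)) := by
  filter_upwards [ae_restrict_mem measurableSet_Ici] with t (ht : r + ε ≤ t) hdt
  have hdt1 := hd1 t (by linarith)
  set a := t - r - ε * d t
  set b := t - r
  have ha : 0 ≤ a := by nlinarith [hdt1.2]
  have hab : a ≤ b := by nlinarith
  have hrhs := integrableOn_delayRhs (A := A) (C := C) hε hεr hd hd1 hq hq1 hxc b
  have hvoc := variation_of_constants (T := Matrix.toEuclideanCLM (𝕜 := ℝ) A) hab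
    (hrhs.mono_set (by rw [uIcc_of_le hab]; exact Icc_subset_Icc_left ha)).intervalIntegrable
    fun s hs => eq_add_integral_of_forall_eq_add_integral
      (hrhs.mono_set (Icc_subset_Icc_right hs.2)) hxode ha hs.1
  have hforcing : ∀ s ∈ uIcc a b,
      NormedSpace.exp ((b - s) • Matrix.toEuclideanCLM (𝕜 := ℝ) A)
          (delayRhs A C r ε d q x s - Matrix.toEuclideanCLM (𝕜 := ℝ) A (x s)) =
        -mv (mexp A (b - s)) (q s • mv C (v s)) := by
    intro s hs
    rw [uIcc_of_le hab] at hs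
    rw [hv s (ha.trans hs.1), mv_mexp, ← map_neg, delayRhs, ← mv_eq_toEuclideanCLM,
      add_sub_cancel_left, ← smul_neg, mv_eq_toEuclideanCLM C, mv_eq_toEuclideanCLM C, ← map_neg,
      neg_sub]
  rw [hv t (by linarith), show ε * |d t| = b - a by rw [abs_of_nonneg hdt]; ring, mv_sub_one,
    mv_mexp, hvoc, intervalIntegral.integral_congr hforcing, intervalIntegral.integral_neg]
  abel
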